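/- arXiv:math/0512277 — 2 statements merged into one kernel-verified Lean document; each statement's English description precedes it below -/
import Mathlib

section
/- Let G be a group generated by k elements x₁, …, x_k, and let α : G → ℤ be a surjective group homomorphism onto the integers (written additively). Then there exist elements x′₁, …, x′_k of G which generate G and satisfy α(x′ᵢ) = 1 for every i = 1, …, k. -/
/-!
Inverting a generator, or multiplying the other generators by powers of one of them, does not
change the generated subgroup (Nielsen moves), and on the values of `α` the second move performs
division with remainder. Euclid's algorithm thus yields a generating tuple with an entry `y i`
whose value divides every other value, hence divides `1` because `α` is onto `ℤ`; after
inverting `y i` if needed, multiplying each other generator `y l` by `y i ^ (1 - α (y l))` makes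
every value `1`.
-/

open Function Subgroup
open Set (range mem_range_self range_subset_iff)

section NielsenMoves

variable {G ι : Type*} [Group G]

theorem closure_range_eq_of_forall_mem {x y : ι → G} (hy : ∀ l, y l ∈ closure (range x))
    (hx : ∀ l, x l ∈ closure (range y)) : closure (range y) = closure (range x) :=
  le_antisymm ((closure_le _).mpr (range_subset_iff.mpr hy))
    ((closure_le _).mpr (range_subset_iff.mpr hx))

theorem mem_closure_range (x : ι → G) (l : ι) : x l ∈ closure (range x) :=
  subset_closure (mem_range_self l)

variable [DecidableEq ι]

theorem closure_range_update_inv (x : ι → G) (i : ι) :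
    closure (range (update x i (x i)⁻¹)) = closure (range x) := by
  set y := update x i (x i)⁻¹
  have hyi : y i = (x i)⁻¹ := update_self ..
  have hy : ∀ l, l ≠ i → y l = x l := fun l hl ↦ update_of_ne hl ..
  refine closure_range_eq_of_forall_mem (fun l ↦ ?_) (fun l ↦ ?_) <;>
    rcases eq_or_ne l i with rfl | hl
  · exact hyi ▸ inv_mem (mem_closure_range x l)
  · exact hy l hl ▸ mem_closure_range x l
  · exact inv_inv (x l) ▸ hyi ▸ inv_mem (mem_closure_range y l)
  · exact hy l hl ▸ mem_closure_range y l

theorem closure_range_update_mul_zpow (x : ι → G) (i : ι) (n : ι → ℤ) :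
    closure (range (update (fun l ↦ x l * x i ^ n l) i (x i))) = closure (range x) := by
  set y := update (fun l ↦ x l * x i ^ n l) i (x i)
  have hyi : y i = x i := update_self ..
  have hy : ∀ l, l ≠ i → y l = x l * x i ^ n l := fun l hl ↦ update_of_ne hl ..
  refine closure_range_eq_of_forall_mem (fun l ↦ ?_) (fun l ↦ ?_) <;>
    rcases eq_or_ne l i with rfl | hl
  · exact hyi ▸ mem_closure_range x l
  · exact hy l hl ▸ mul_mem (mem_closure_range x l) (zpow_mem (mem_closure_range x i) _)
  · exact hyi ▸ mem_closure_range y l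
  · have hxl : x l = y l * y i ^ (-n l) := by rw [hy l hl, hyi, mul_assoc, ← zpow_add]; simp
    exact hxl ▸ mul_mem (mem_closure_range y l) (zpow_mem (mem_closure_range y i) _)

end NielsenMoves

section

variable {G ι : Type*} [Group G] (φ : G →* Multiplicative ℤ)

theorem dvd_toAdd_of_closure_range_eq_top {y : ι → G} (hy : closure (range y) = ⊤) {a : ℤ}
    (ha : ∀ l, a ∣ (φ (y l)).toAdd) (g : G) : a ∣ (φ g).toAdd := by
  induction (hy ▸ mem_top g : g ∈ closure (range y)) using closure_induction with
  | mem _ h => obtain ⟨l, rfl⟩ := h; exact ha l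
  | one => simp
  | mul _ _ _ _ h₁ h₂ => simpa using dvd_add h₁ h₂
  | inv _ _ h => simpa using h

theorem toAdd_map_update_mul_zpow [DecidableEq ι] (y : ι → G) {i j : ι} (hji : j ≠ i)
    (n : ι → ℤ) :
    (φ (update (fun l ↦ y l * y i ^ n l) i (y i) j)).toAdd =
      (φ (y j)).toAdd + n j * (φ (y i)).toAdd := by
  simp [update_of_ne hji]

/-- One step of the Euclidean algorithm, performed by a Nielsen move. -/
theorem exists_closure_range_eq_top_natAbs_lt [DecidableEq ι] {y : ι → G}
    (hy : closure (range y) = ⊤) {i j : ι} (hi : (φ (y i)).toAdd ≠ 0)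
    (hj : ¬ (φ (y i)).toAdd ∣ (φ (y j)).toAdd) :
    ∃ z : ι → G, closure (range z) = ⊤ ∧
      ∃ l, (φ (z l)).toAdd ≠ 0 ∧ (φ (z l)).toAdd.natAbs < (φ (y i)).toAdd.natAbs := by
  set a := (φ (y i)).toAdd
  have hji : j ≠ i := by rintro rfl; exact hj dvd_rfl
  set z := update (fun l ↦ y l * y i ^ (-((φ (y l)).toAdd / a))) i (y i)
  have hzj : (φ (z j)).toAdd = (φ (y j)).toAdd % a := by
    rw [toAdd_map_update_mul_zpow φ y hji, Int.emod_def]; ring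
  refine ⟨z, (closure_range_update_mul_zpow y i _).trans hy, j, hzj ▸ ?_⟩
  refine ⟨fun h ↦ hj (Int.dvd_of_emod_eq_zero h), ?_⟩
  have := Int.emod_nonneg (φ (y j)).toAdd hi
  have := Int.emod_lt (φ (y j)).toAdd hi
  omega

variable {φ}

theorem exists_closure_range_eq_top_toAdd_eq_one [DecidableEq ι] (hφ : Surjective φ)
    {y : ι → G} (hy : closure (range y) = ⊤) {i : ι} (hi : (φ (y i)).toAdd ≠ 0) :
    ∃ z : ι → G, closure (range z) = ⊤ ∧ ∃ l, (φ (z l)).toAdd = 1 := by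
  induction hn : (φ (y i)).toAdd.natAbs using Nat.strong_induction_on generalizing y i with
  | _ n ih =>
  by_cases hdvd : ∀ j, (φ (y i)).toAdd ∣ (φ (y j)).toAdd
  · obtain ⟨g, hg⟩ := hφ (.ofAdd 1)
    have hunit : (φ (y i)).toAdd ∣ 1 := by
      simpa [hg] using dvd_toAdd_of_closure_range_eq_top φ hy hdvd g
    rcases Int.isUnit_iff.mp (isUnit_of_dvd_one hunit) with h | h
    · exact ⟨y, hy, i, h⟩
    · exact ⟨_, (closure_range_update_inv y i).trans hy, i, by simp [h]⟩
  · obtain ⟨j, hj⟩ := not_forall.mp hdvd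
    obtain ⟨z, hz, l, hl, hlt⟩ := exists_closure_range_eq_top_natAbs_lt φ hy hi hj
    exact ih _ (hn ▸ hlt) hz hl rfl

theorem exists_closure_range_eq_top_forall_toAdd_eq_one (hφ : Surjective φ) {x : ι → G}
    (hx : closure (range x) = ⊤) :
    ∃ x' : ι → G, closure (range x') = ⊤ ∧ ∀ l, (φ (x' l)).toAdd = 1 := by
  classical
  obtain ⟨i, hi⟩ : ∃ i, (φ (x i)).toAdd ≠ 0 := by
    by_contra! h
    obtain ⟨g, hg⟩ := hφ (.ofAdd 1)
    simpa [hg] using dvd_toAdd_of_closure_range_eq_top φ hx (a := 0) (by simp [h]) g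
  obtain ⟨y, hy, i, hyi⟩ := exists_closure_range_eq_top_toAdd_eq_one hφ hx hi
  refine ⟨_, (closure_range_update_mul_zpow y i fun l ↦ 1 - (φ (y l)).toAdd).trans hy,
    fun l ↦ ?_⟩
  rcases eq_or_ne l i with rfl | hl
  · simpa using hyi
  · rw [toAdd_map_update_mul_zpow φ y hl, hyi]; ring

end

/-- If a group `G` is generated by `k` elements and admits a surjective homomorphism
`α` onto `ℤ`, then `G` has a generating set of `k` elements each of which is sent
to `1` by `α`. -/
theorem exists_generating_set_mapping_to_one
    {G : Type*} [Group G] {k : ℕ} (x : Fin k → G)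
    (hgen : Subgroup.closure (Set.range x) = ⊤)
    (α : G → ℤ) (hα : ∀ a b : G, α (a * b) = α a + α b)
    (hsurj : Function.Surjective α) :
    ∃ x' : Fin k → G,
      Subgroup.closure (Set.range x') = ⊤ ∧ ∀ i : Fin k, α (x' i) = 1 := by
  let φ : G →* Multiplicative ℤ :=
    MonoidHom.mk' (fun g ↦ .ofAdd (α g)) fun a b ↦ by rw [hα, ofAdd_add]
  exact exists_closure_range_eq_top_forall_toAdd_eq_one (φ := φ)
    (Multiplicative.ofAdd.surjective.comp hsurj) hgen
end

section
/- Let Δ : ℂ∖{0} → ℂ be holomorphic with Δ(t) = Δ(t⁻¹) for all t ≠ 0 and Δ(1) = 1. Let z₀ ∈ ℂ and set w = e^{2z₀}, and assume w ≠ 1 and Δ(w) = 0. Then, as t tends to 1 with t ≠ 1, the quotient Δ(t)·Δ(t·w)·Δ(t·w⁻¹) / ((t − 1)²·(t² − (w + w⁻¹)·t + 1)) tends to ((1/2)·g′(z₀))², where g(z) = Δ(e^{2z})/(e^{z} − e^{−z}). -/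
open Filter Topology Complex

/-!
Since `Δ(w) = 0` and, by the symmetry, `Δ(w⁻¹) = 0`, the quotient factors as
`Δ(t) · (Δ(tw)/(t-1)) · (Δ(tw⁻¹)/(t-1)) / (t² - (w + w⁻¹)t + 1)`, whose factors tend to
`1`, `w Δ'(w)`, `w⁻¹ Δ'(w⁻¹) = -w Δ'(w)` and `2 - w - w⁻¹`. On the other side, the numerator of
`g` vanishes at `z₀`, so `g'(z₀) = 2 w Δ'(w) / (e^{z₀} - e^{-z₀})`, and
`(e^{z₀} - e^{-z₀})² = w + w⁻¹ - 2`. Both sides equal `w² Δ'(w)² / (w + w⁻¹ - 2)`.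
-/

section

variable {𝕜 : Type*} [NontriviallyNormedField 𝕜]

theorem deriv_inv_eq_of_eventuallyEq_comp_inv {f : 𝕜 → 𝕜} {w : 𝕜} (hw : w ≠ 0)
    (hf : DifferentiableAt 𝕜 f w⁻¹) (hsym : f =ᶠ[𝓝 w] fun t => f t⁻¹) :
    deriv f w⁻¹ = -w ^ 2 * deriv f w := by
  have hcomp : HasDerivAt (fun t => f t⁻¹) (deriv f w⁻¹ * -(w ^ 2)⁻¹) w :=
    hf.hasDerivAt.comp w (hasDerivAt_inv hw)
  rw [(hcomp.congr_of_eventuallyEq hsym).deriv]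
  field_simp

theorem tendsto_apply_mul_div_sub_one {f : 𝕜 → 𝕜} {a : 𝕜} (hf : DifferentiableAt 𝕜 f a)
    (ha : f a = 0) :
    Tendsto (fun t => f (t * a) / (t - 1)) (𝓝[≠] 1) (𝓝 (a * deriv f a)) := by
  have hcomp : HasDerivAt (fun t => f (t * a)) (deriv f a * a) 1 :=
    HasDerivAt.comp_of_eq 1 hf.hasDerivAt (hasDerivAt_mul_const a) (one_mul a).symm
  rw [mul_comm a]
  refine (hasDerivAt_iff_tendsto_slope.mp hcomp).congr fun t => ?_
  simp [slope_def_field, ha]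

theorem HasDerivAt.div_of_eq_zero {f g : 𝕜 → 𝕜} {f' g' x : 𝕜} (hf : HasDerivAt f f' x)
    (hg : HasDerivAt g g' x) (hfx : f x = 0) (hgx : g x ≠ 0) :
    HasDerivAt (fun y => f y / g y) (f' / g x) x := by
  have h := hf.fun_div hg hgx
  rwa [hfx, zero_mul, sub_zero, sq, ← div_div, mul_div_cancel_right₀ _ hgx] at h

end

namespace Complex

theorem exp_sub_exp_neg_sq (z : ℂ) :
    (exp z - exp (-z)) ^ 2 = exp (2 * z) + (exp (2 * z))⁻¹ - 2 := by
  rw [← exp_neg, sub_sq, mul_assoc, ← exp_add, add_neg_cancel, exp_zero, ← exp_nat_mul,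
    ← exp_nat_mul]
  push_cast
  ring_nf

theorem hasDerivAt_comp_exp_two_mul_div_exp_sub_exp_neg {f : ℂ → ℂ} {z₀ : ℂ}
    (hf : DifferentiableAt ℂ f (exp (2 * z₀))) (hroot : f (exp (2 * z₀)) = 0)
    (hz₀ : exp z₀ - exp (-z₀) ≠ 0) :
    HasDerivAt (fun z => f (exp (2 * z)) / (exp z - exp (-z)))
      (2 * exp (2 * z₀) * deriv f (exp (2 * z₀)) / (exp z₀ - exp (-z₀))) z₀ := by
  have hexp : HasDerivAt (fun z => exp (2 * z)) (exp (2 * z₀) * 2) z₀ :=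
    (hasDerivAt_const_mul 2).cexp
  have hnum : HasDerivAt (fun z => f (exp (2 * z)))
      (deriv f (exp (2 * z₀)) * (exp (2 * z₀) * 2)) z₀ :=
    hf.hasDerivAt.comp z₀ hexp
  have hden : HasDerivAt (fun z => exp z - exp (-z)) (exp z₀ + exp (-z₀)) z₀ :=
    ((hasDerivAt_exp z₀).fun_sub (hasDerivAt_neg z₀).cexp).congr_deriv (by ring)
  exact (hnum.div_of_eq_zero hden hroot hz₀).congr_deriv (by ring)

end Complex

/-- The analytic identity underlying the main theorem: for `Δ` holomorphic on `ℂ ∖ {0}`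
with `Δ(t) = Δ(t⁻¹)` and `Δ(1) = 1`, and `w = e^{2z₀} ≠ 1` a root of `Δ`, the quotient
`Δ(t) Δ(tw) Δ(tw⁻¹) / ((t-1)² (t² - (w + w⁻¹) t + 1))` tends, as `t → 1`, `t ≠ 1`, to
`((1/2) g′(z₀))²` where `g(z) = Δ(e^{2z}) / (e^z - e^{-z})`. -/
theorem limit_nonacyclic_torsion_at_bifurcation
    (Δ : ℂ → ℂ) (hΔ : ∀ z : ℂ, z ≠ 0 → DifferentiableAt ℂ Δ z)
    (hsym : ∀ t : ℂ, t ≠ 0 → Δ t = Δ t⁻¹) (hone : Δ 1 = 1)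
    (z₀ : ℂ) (w : ℂ) (hw : w = Complex.exp (2 * z₀)) (hw1 : w ≠ 1)
    (hroot : Δ w = 0)
    (g : ℂ → ℂ)
    (hg : g = fun z : ℂ => Δ (Complex.exp (2 * z)) / (Complex.exp z - Complex.exp (-z))) :
    Filter.Tendsto
      (fun t : ℂ => Δ t * Δ (t * w) * Δ (t * w⁻¹) /
        ((t - 1) ^ 2 * (t ^ 2 - (w + w⁻¹) * t + 1)))
      (nhdsWithin 1 {(1 : ℂ)}ᶜ)
      (nhds (((1 / 2 : ℂ) * deriv g z₀) ^ 2)) := by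
  have hw0 : w ≠ 0 := hw ▸ exp_ne_zero _
  have hq : w + w⁻¹ - 2 ≠ 0 := by
    rw [show w + w⁻¹ - 2 = (w - 1) ^ 2 / w by field_simp; ring]
    exact div_ne_zero (pow_ne_zero 2 (sub_ne_zero.mpr hw1)) hw0
  have hsq : (exp z₀ - exp (-z₀)) ^ 2 = w + w⁻¹ - 2 := hw ▸ exp_sub_exp_neg_sq z₀
  have hz₀ : exp z₀ - exp (-z₀) ≠ 0 := fun h => hq (by rw [← hsq, h]; ring)
  have hderiv_inv : deriv Δ w⁻¹ = -w ^ 2 * deriv Δ w :=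
    deriv_inv_eq_of_eventuallyEq_comp_inv hw0 (hΔ _ (inv_ne_zero hw0))
      (eventually_ne_nhds hw0 |>.mono hsym)
  have hderiv_g : deriv g z₀ = 2 * w * deriv Δ w / (exp z₀ - exp (-z₀)) := by
    subst hg hw
    exact (hasDerivAt_comp_exp_two_mul_div_exp_sub_exp_neg (hΔ _ hw0) hroot hz₀).deriv
  have hquad : Tendsto (fun t : ℂ => t ^ 2 - (w + w⁻¹) * t + 1) (𝓝[≠] 1)
      (𝓝 (-(w + w⁻¹ - 2))) := by
    have hcont : Continuous fun t : ℂ => t ^ 2 - (w + w⁻¹) * t + 1 := by fun_prop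
    convert (hcont.tendsto 1).mono_left nhdsWithin_le_nhds using 2
    ring
  have hlim := (((hΔ 1 one_ne_zero).continuousAt.tendsto.mono_left nhdsWithin_le_nhds).mul
    (tendsto_apply_mul_div_sub_one (hΔ w hw0) hroot)).mul
    (tendsto_apply_mul_div_sub_one (hΔ _ (inv_ne_zero hw0)) (hsym w hw0 ▸ hroot))
    |>.div hquad (neg_ne_zero.mpr hq)
  convert hlim using 2
  · rw [Pi.div_apply, div_mul_eq_div_div_swap, sq (_ - 1), ← div_div]
    ring
  · rw [hderiv_g, hderiv_inv, hone, ← hsq]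
    field_simp
end
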